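/- arXiv:2605.28207 — 2 statements merged into one kernel-verified Lean document; each statement's English description precedes it below -/
import Mathlib

section
/- Let K be an E-by-E real symmetric positive semidefinite matrix with strictly positive diagonal entries, λ > 0, and let μ = max over i ≠ j of |K_ij| / √(K_ii K_jj). Fix a subset S of size K_card with (K_card − 1)·μ < 1, and define F(S) = log det(K_S + λ I) and G(S) = Σ_{e∈S} log(K_ee + λ). Then K_card · log(1 − (K_card − 1)μ) ≤ F(S) − G(S) ≤ K_card · log(1 + (K_card − 1)μ). -/
open Matrix Finset

/-- Principal submatrix of `K` indexed by a finite set `S`. -/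
noncomputable def subK {E : ℕ} (K : Matrix (Fin E) (Fin E) ℝ) (S : Finset (Fin E)) :
    Matrix {x // x ∈ S} {x // x ∈ S} ℝ :=
  K.submatrix (fun i => i.1) (fun j => j.1)

/-- The mutual coherence `μ = max_{i ≠ j} |K_ij| / √(K_ii K_jj)`. -/
noncomputable def mutualCoherence {E : ℕ} (K : Matrix (Fin E) (Fin E) ℝ) : ℝ :=
  sSup {x : ℝ | ∃ i j : Fin E, i ≠ j ∧ x = |K i j| / Real.sqrt (K i i * K j j)}

/-- `F(S) = log det (K_S + λ I)`. -/
noncomputable def Ffun {E : ℕ} (K : Matrix (Fin E) (Fin E) ℝ) (lam : ℝ)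
    (S : Finset (Fin E)) : ℝ :=
  Real.log (subK K S + lam • 1).det

/-- `G(S) = Σ_{e ∈ S} log (K_ee + λ)`. -/
noncomputable def Gfun {E : ℕ} (K : Matrix (Fin E) (Fin E) ℝ) (lam : ℝ)
    (S : Finset (Fin E)) : ℝ :=
  ∑ e ∈ S, Real.log (K e e + lam)

/-!
Scaling `M = K_S + λI` on both sides by `D^{-1/2}`, `D = diag(K_ee + λ)`, gives a symmetric matrix
`N` with unit diagonal and `det M = (∏ (K_ee + λ)) · det N`, so `F(S) - G(S) = log det N`.
Since `λ ≥ 0`, each off-diagonal entry of `N` is at most `μ` in absolute value, so Gershgorin puts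
every eigenvalue of `N` in `[1 - (|S|-1)μ, 1 + (|S|-1)μ]`, and `log det N` is the sum of their logs.
-/

theorem Finset.card_mul_log_le_log_prod {ι : Type*} (s : Finset ι) {x : ι → ℝ} {b : ℝ}
    (hb : 0 < b) (hx : ∀ i ∈ s, b ≤ x i) : #s * Real.log b ≤ Real.log (∏ i ∈ s, x i) := by
  rw [Real.log_prod fun i hi => (hb.trans_le (hx i hi)).ne']
  simpa using card_nsmul_le_sum s _ _ fun i hi => Real.log_le_log hb (hx i hi)

theorem Finset.log_prod_le_card_mul_log {ι : Type*} (s : Finset ι) {x : ι → ℝ} {b : ℝ}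
    (hx : ∀ i ∈ s, 0 < x i ∧ x i ≤ b) : Real.log (∏ i ∈ s, x i) ≤ #s * Real.log b := by
  rw [Real.log_prod fun i hi => (hx i hi).1.ne']
  simpa using sum_le_card_nsmul s _ _ fun i hi => Real.log_le_log (hx i hi).1 (hx i hi).2

namespace Matrix

variable {n : Type*} [Fintype n] [DecidableEq n]

theorem sum_norm_offDiag_le_of_abs_le {N : Matrix n n ℝ} {μ : ℝ}
    (h : ∀ i j, i ≠ j → |N i j| ≤ μ) (k : n) :
    ∑ j ∈ univ.erase k, ‖N k j‖ ≤ (Fintype.card n - 1) * μ := by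
  calc ∑ j ∈ univ.erase k, ‖N k j‖ ≤ #(univ.erase k) • μ :=
        sum_le_card_nsmul _ _ _ fun j hj => h k j (ne_of_mem_erase hj).symm
    _ = (Fintype.card n - 1) * μ := by
        rw [card_erase_of_mem (mem_univ k), card_univ, nsmul_eq_mul,
          Nat.cast_sub (Fintype.card_pos_iff.2 ⟨k⟩), Nat.cast_one]

theorem IsHermitian.eigenvalues_mem_Icc_of_sum_norm_offDiag_le {N : Matrix n n ℝ}
    (hN : N.IsHermitian) {a : ℝ} (hdiag : ∀ i, N i i = 1)
    (hrow : ∀ k, ∑ j ∈ univ.erase k, ‖N k j‖ ≤ a) (i : n) :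
    hN.eigenvalues i ∈ Set.Icc (1 - a) (1 + a) := by
  have hev : Module.End.HasEigenvalue (toLin' N) (hN.eigenvalues i) :=
    Module.End.hasEigenvalue_iff_mem_spectrum.2 <| by
      rw [spectrum_toLin']; exact hN.eigenvalues_mem_spectrum_real i
  obtain ⟨k, hk⟩ := eigenvalue_mem_ball hev
  rw [Metric.mem_closedBall, Real.dist_eq, hdiag k] at hk
  obtain ⟨hlow, hhigh⟩ := abs_le.1 (hk.trans (hrow k))
  constructor <;> linarith

theorem IsHermitian.log_det_mem_Icc_of_sum_norm_offDiag_le {N : Matrix n n ℝ}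
    (hN : N.IsHermitian) {a : ℝ} (ha : a < 1) (hdiag : ∀ i, N i i = 1)
    (hrow : ∀ k, ∑ j ∈ univ.erase k, ‖N k j‖ ≤ a) :
    0 < N.det ∧ Fintype.card n * Real.log (1 - a) ≤ Real.log N.det ∧
      Real.log N.det ≤ Fintype.card n * Real.log (1 + a) := by
  have hev := hN.eigenvalues_mem_Icc_of_sum_norm_offDiag_le hdiag hrow
  have hpos : ∀ i, 0 < hN.eigenvalues i := fun i => by linarith [(hev i).1]
  rw [show N.det = ∏ i, hN.eigenvalues i by simpa using hN.det_eq_prod_eigenvalues,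
    ← card_univ]
  exact ⟨prod_pos fun i _ => hpos i,
    card_mul_log_le_log_prod _ (by linarith) fun i _ => (hev i).1,
    log_prod_le_card_mul_log _ fun i _ => ⟨hpos i, (hev i).2⟩⟩

/-- `D^{-1/2} M D^{-1/2}` with `D = diag M`; for `M = K_S + λI` this is the paper's `I + R_S`. -/
noncomputable def diagNormalize (M : Matrix n n ℝ) : Matrix n n ℝ :=
  diagonal (fun i => (Real.sqrt (M i i))⁻¹) * M * diagonal (fun i => (Real.sqrt (M i i))⁻¹)

theorem diagNormalize_apply (M : Matrix n n ℝ) (i j : n) :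
    M.diagNormalize i j = M i j / (Real.sqrt (M i i) * Real.sqrt (M j j)) := by
  rw [diagNormalize, mul_diagonal, diagonal_mul]
  ring

theorem diagNormalize_apply_self {M : Matrix n n ℝ} {i : n} (h : 0 < M i i) :
    M.diagNormalize i i = 1 := by
  rw [diagNormalize_apply, Real.mul_self_sqrt h.le, div_self h.ne']

theorem IsHermitian.diagNormalize {M : Matrix n n ℝ} (hM : M.IsHermitian) :
    M.diagNormalize.IsHermitian :=
  IsHermitian.ext fun i j => by
    rw [star_trivial, diagNormalize_apply, diagNormalize_apply, mul_comm, ← hM.apply i j,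
      star_trivial]

theorem det_eq_prod_diag_mul_det_diagNormalize {M : Matrix n n ℝ} (h : ∀ i, 0 < M i i) :
    M.det = (∏ i, M i i) * M.diagNormalize.det := by
  have hsqrt : ∏ i, M i i = (∏ i, Real.sqrt (M i i)) ^ 2 := by
    rw [← prod_pow]
    exact prod_congr rfl fun i _ => (Real.sq_sqrt (h i).le).symm
  have hne : ∏ i, Real.sqrt (M i i) ≠ 0 :=
    prod_ne_zero_iff.2 fun i _ => (Real.sqrt_pos.2 (h i)).ne'
  rw [diagNormalize, det_mul, det_mul, det_diagonal, hsqrt, prod_inv_distrib]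
  field_simp

end Matrix

theorem le_mutualCoherence {E : ℕ} (K : Matrix (Fin E) (Fin E) ℝ) {i j : Fin E} (h : i ≠ j) :
    |K i j| / Real.sqrt (K i i * K j j) ≤ mutualCoherence K := by
  refine le_csSup ((Set.finite_range fun p : Fin E × Fin E =>
    |K p.1 p.2| / Real.sqrt (K p.1 p.1 * K p.2 p.2)).subset ?_).bddAbove ⟨i, j, h, rfl⟩
  rintro x ⟨i, j, -, rfl⟩
  exact ⟨(i, j), rfl⟩

theorem subK_add_smul_one_apply_self {E : ℕ} (K : Matrix (Fin E) (Fin E) ℝ) (lam : ℝ)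
    (S : Finset (Fin E)) (i : S) : (subK K S + lam • 1) i i = K i i + lam := by
  simp [subK]

theorem subK_add_smul_one_apply_of_ne {E : ℕ} (K : Matrix (Fin E) (Fin E) ℝ) (lam : ℝ)
    {S : Finset (Fin E)} {i j : S} (hij : i ≠ j) : (subK K S + lam • 1) i j = K i j := by
  simp [subK, one_apply_ne hij]

theorem abs_diagNormalize_subK_add_smul_one_le {E : ℕ} {K : Matrix (Fin E) (Fin E) ℝ}
    (hdiag : ∀ e, 0 < K e e) {lam : ℝ} (hlam : 0 ≤ lam) (S : Finset (Fin E)) {i j : S}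
    (hij : i ≠ j) : |(subK K S + lam • 1).diagNormalize i j| ≤ mutualCoherence K := by
  have hsqrt :
      Real.sqrt (K i i * K j j) ≤ Real.sqrt (K i i + lam) * Real.sqrt (K j j + lam) := by
    rw [← Real.sqrt_mul (by linarith [hdiag i])]
    exact Real.sqrt_le_sqrt
      (mul_le_mul (by linarith) (by linarith) (hdiag j).le (by linarith [hdiag i]))
  calc |(subK K S + lam • 1).diagNormalize i j|
      = |K i j| / (Real.sqrt (K i i + lam) * Real.sqrt (K j j + lam)) := by
        rw [diagNormalize_apply, subK_add_smul_one_apply_of_ne K lam hij,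
          subK_add_smul_one_apply_self, subK_add_smul_one_apply_self, abs_div,
          abs_of_nonneg (mul_nonneg (Real.sqrt_nonneg _) (Real.sqrt_nonneg _))]
    _ ≤ |K i j| / Real.sqrt (K i i * K j j) :=
        div_le_div_of_nonneg_left (abs_nonneg _)
          (Real.sqrt_pos.2 (mul_pos (hdiag i) (hdiag j))) hsqrt
    _ ≤ mutualCoherence K := le_mutualCoherence K (Subtype.coe_ne_coe.2 hij)

/-- For `K` real symmetric positive semidefinite with strictly positive
diagonal, `λ > 0`, mutual coherence `μ`, and a subset `S` of size `K_card` with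
`(K_card − 1)μ < 1`:
`K_card·log(1 − (K_card − 1)μ) ≤ F(S) − G(S) ≤ K_card·log(1 + (K_card − 1)μ)`,
where `F(S) = log det(K_S + λI)` and `G(S) = Σ_{e∈S} log(K_ee + λ)`. -/
theorem logdet_diag_sandwich {E : ℕ} (K : Matrix (Fin E) (Fin E) ℝ) (hK : K.PosSemidef)
    (hdiag : ∀ e, 0 < K e e) (lam : ℝ) (hlam : 0 < lam)
    (S : Finset (Fin E)) (Kcard : ℕ) (hS : S.card = Kcard)
    (hmu : ((Kcard : ℝ) - 1) * mutualCoherence K < 1) :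
    (Kcard : ℝ) * Real.log (1 - ((Kcard : ℝ) - 1) * mutualCoherence K) ≤
        Ffun K lam S - Gfun K lam S ∧
      Ffun K lam S - Gfun K lam S ≤
        (Kcard : ℝ) * Real.log (1 + ((Kcard : ℝ) - 1) * mutualCoherence K) := by
  subst hS
  have hMpos : ∀ i, 0 < (subK K S + lam • 1) i i := fun i => by
    rw [subK_add_smul_one_apply_self]; linarith [hdiag i]
  have hM : (subK K S + lam • 1).IsHermitian :=
    (hK.1.submatrix _).add (isHermitian_one.smul (IsSelfAdjoint.all lam))
  obtain ⟨hdet, hlow, hhigh⟩ := hM.diagNormalize.log_det_mem_Icc_of_sum_norm_offDiag_le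
    (by rwa [Fintype.card_coe]) (fun i => diagNormalize_apply_self (hMpos i))
    (sum_norm_offDiag_le_of_abs_le fun _ _ =>
      abs_diagNormalize_subK_add_smul_one_le hdiag hlam.le S)
  have hFG : Ffun K lam S - Gfun K lam S = Real.log (subK K S + lam • 1).diagNormalize.det := by
    rw [Ffun, Gfun, det_eq_prod_diag_mul_det_diagNormalize hMpos,
      Real.log_mul (prod_pos fun i _ => hMpos i).ne' hdet.ne',
      Real.log_prod fun i _ => (hMpos i).ne', ← sum_coe_sort S]
    simp only [subK_add_smul_one_apply_self]
    ring
  rw [Fintype.card_coe] at hlow hhigh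
  exact hFG ▸ ⟨hlow, hhigh⟩
end

section
/- Let K and K̂ be E-by-E real symmetric matrices with K positive semidefinite, λ > 0, λ̂ ∈ ℝ, and fix m ≥ 1. Suppose every entry of K̂ − K has absolute value at most ε and |λ̂ − λ| ≤ ε/m, and set Δ = (m + 1/m)·ε with Δ < λ. Define F(S) = log det(K_S + λ I) and F̂(S) = log det(K̂_S + λ̂ I) on size-m subsets S of {1,...,E}. If Ŝ maximizes F̂ over size-m subsets and S* maximizes F over size-m subsets, then F(Ŝ) ≥ F(S*) − m · log((1 + Δ/λ)/(1 − Δ/λ)). -/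
/-!
Loewner-order monotonicity of the determinant drives the argument. An entrywise `ε`-perturbation
of an `m × m` symmetric matrix is at most `m ε` in the Loewner order, so together with
`|λ̂ - λ| ≤ ε / m` it sandwiches `K̂_S + λ̂ I` between `K_S + (λ ∓ Δ) I`. As `K_S ≥ 0`, these are
in turn squeezed between `(1 ∓ Δ/λ) (K_S + λ I)`, so `F̂(S) - F(S)` lies in
`[m log (1 - Δ/λ), m log (1 + Δ/λ)]` for every `S`. Then
`F(Ŝ) ≥ F̂(Ŝ) - m log (1 + Δ/λ) ≥ F̂(S*) - m log (1 + Δ/λ) ≥ F(S*) - m log ((1 + Δ/λ)/(1 - Δ/λ))`.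
-/

open Matrix Finset

open scoped MatrixOrder

namespace Matrix

theorem dotProduct_mulVec_le_of_abs_le {n : Type*} [Fintype n] {Q : Matrix n n ℝ} {ε : ℝ}
    (h : ∀ i j, |Q i j| ≤ ε) (x : n → ℝ) : x ⬝ᵥ Q *ᵥ x ≤ ε * (∑ i, |x i|) ^ 2 :=
  calc x ⬝ᵥ Q *ᵥ x = ∑ i, ∑ j, x i * Q i j * x j := by
        simp only [dotProduct, mulVec, Finset.mul_sum, mul_assoc]
    _ ≤ ∑ i, ∑ j, |x i| * ε * |x j| := by
        refine Finset.sum_le_sum fun i _ => Finset.sum_le_sum fun j _ => ?_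
        calc x i * Q i j * x j ≤ |x i| * |Q i j| * |x j| := by
              simpa only [abs_mul] using le_abs_self (x i * Q i j * x j)
          _ ≤ |x i| * ε * |x j| := by gcongr; exact h i j
    _ = ε * (∑ i, |x i|) ^ 2 := by
        rw [sq, Finset.sum_mul_sum, Finset.mul_sum]
        exact Finset.sum_congr rfl fun i _ => by rw [Finset.mul_sum]; ring_nf

variable {n : Type*} [DecidableEq n]

namespace PosSemidef

variable {P : Matrix n n ℝ} {r δ : ℝ}

theorem posDef_add_smul_one (hP : P.PosSemidef) (hr : 0 < r) : (P + r • 1).PosDef :=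
  PosDef.posSemidef_add hP (PosDef.one.smul hr)

theorem one_sub_smul_le_add_smul_one (hP : P.PosSemidef) (hr : 0 < r) (hδ : 0 ≤ δ) :
    (1 - δ / r) • (P + r • 1) ≤ P + (r - δ) • 1 := by
  have hdiff : P + (r - δ) • 1 - (1 - δ / r) • (P + r • 1) = (δ / r) • P := by
    rw [smul_add, smul_smul, show (1 - δ / r) * r = r - δ by field_simp]
    module
  rw [le_iff, hdiff]
  exact hP.smul (div_nonneg hδ hr.le)

theorem add_smul_one_le_one_add_smul (hP : P.PosSemidef) (hr : 0 < r) (hδ : 0 ≤ δ) :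
    P + (r + δ) • 1 ≤ (1 + δ / r) • (P + r • 1) := by
  have hdiff : (1 + δ / r) • (P + r • 1) - (P + (r + δ) • 1) = (δ / r) • P := by
    rw [smul_add, smul_smul, show (1 + δ / r) * r = r + δ by field_simp]
    module
  rw [le_iff, hdiff]
  exact hP.smul (div_nonneg hδ hr.le)

end PosSemidef

variable [Fintype n]

theorem PosSemidef.one_le_det_one_add {P : Matrix n n ℝ} (hP : P.PosSemidef) :
    1 ≤ (1 + P).det := by
  have hH : (1 + P).IsHermitian := isHermitian_one.add hP.isHermitian
  rw [hH.det_eq_prod_eigenvalues]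
  refine Finset.one_le_prod fun i _ => ?_
  have hmem : hH.eigenvalues i ∈ spectrum ℝ (algebraMap ℝ _ 1 + P) := by
    simpa using hH.eigenvalues_mem_spectrum_real i
  rw [← spectrum.singleton_add_eq] at hmem
  obtain ⟨_, rfl, p, hp, hsum⟩ := hmem
  have := spectrum_nonneg_of_nonneg hP.nonneg hp
  simp only [RCLike.ofReal_real_eq_id, id]
  linarith

theorem PosDef.det_le_det_of_le {A B : Matrix n n ℝ} (hA : A.PosDef) (hAB : A ≤ B) :
    A.det ≤ B.det := by
  set R := CFC.sqrt A
  have hRR : R * R = A := CFC.sqrt_mul_sqrt_self A hA.posSemidef.nonneg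
  have hR : IsUnit R.det := by
    rw [← isUnit_iff_isUnit_det, CFC.isUnit_sqrt_iff A hA.posSemidef.nonneg,
      isUnit_iff_isUnit_det]
    exact hA.det_pos.ne'.isUnit
  have hRinv : (R⁻¹)ᴴ = R⁻¹ := (CFC.sqrt_nonneg A).posSemidef.isHermitian.inv
  have hM : (R⁻¹ * (B - A) * R⁻¹).PosSemidef := by
    simpa only [hRinv] using (le_iff.mp hAB).conjTranspose_mul_mul_same R⁻¹
  have hB : B = R * (1 + R⁻¹ * (B - A) * R⁻¹) * R := by
    simp only [Matrix.mul_add, Matrix.add_mul, Matrix.mul_one, hRR, ← Matrix.mul_assoc,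
      mul_nonsing_inv R hR, Matrix.one_mul]
    rw [Matrix.mul_assoc, nonsing_inv_mul R hR, Matrix.mul_one]
    abel
  calc A.det = R.det * 1 * R.det := by rw [← hRR, det_mul]; ring
    _ ≤ R.det * (1 + R⁻¹ * (B - A) * R⁻¹).det * R.det := by
        have : 0 ≤ R.det * R.det := by rw [← det_mul, hRR]; exact hA.det_pos.le
        nlinarith [hM.one_le_det_one_add]
    _ = B.det := by rw [← det_mul, ← det_mul, ← hB]

theorem PosDef.log_det_le_log_det_of_le {A B : Matrix n n ℝ} (hA : A.PosDef) (hAB : A ≤ B) :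
    Real.log A.det ≤ Real.log B.det :=
  Real.log_le_log hA.det_pos (hA.det_le_det_of_le hAB)

theorem PosDef.log_det_smul {A : Matrix n n ℝ} (hA : A.PosDef) {c : ℝ} (hc : 0 < c) :
    Real.log (c • A).det = Fintype.card n * Real.log c + Real.log A.det := by
  rw [det_smul, Real.log_mul (pow_pos hc _).ne' hA.det_pos.ne', Real.log_pow]

theorem le_add_smul_one_of_abs_sub_le {A B : Matrix n n ℝ} (hA : A.IsHermitian)
    (hB : B.IsHermitian) {ε : ℝ} (hε : 0 ≤ ε) (h : ∀ i j, |A i j - B i j| ≤ ε) :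
    A ≤ B + (Fintype.card n * ε) • 1 := by
  rw [le_iff, posSemidef_iff_dotProduct_mulVec]
  refine ⟨(hB.add (isHermitian_one.smul (.all _))).sub hA, fun x => ?_⟩
  have hquad := dotProduct_mulVec_le_of_abs_le (Q := A - B) h x
  have hcs : (∑ i, |x i|) ^ 2 ≤ Fintype.card n * (x ⬝ᵥ x) := by
    simpa [sq_abs, dotProduct, ← sq] using
      sq_sum_le_card_mul_sum_sq (s := Finset.univ) (f := fun i => |x i|)
  have hexpand : star x ⬝ᵥ (B + (Fintype.card n * ε) • 1 - A) *ᵥ x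
      = Fintype.card n * ε * (x ⬝ᵥ x) - x ⬝ᵥ (A - B) *ᵥ x := by
    simp only [star_trivial, sub_mulVec, add_mulVec, smul_mulVec, one_mulVec, dotProduct_sub,
      dotProduct_add, dotProduct_smul, smul_eq_mul]
    ring
  rw [hexpand]
  nlinarith [mul_le_mul_of_nonneg_left hcs hε]

theorem add_smul_one_le_add_smul_one_of_abs_sub_le {A B : Matrix n n ℝ} (hA : A.IsHermitian)
    (hB : B.IsHermitian) {ε : ℝ} (hε : 0 ≤ ε) (h : ∀ i j, |A i j - B i j| ≤ ε) {a b : ℝ}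
    (hab : Fintype.card n * ε + a ≤ b) : A + a • 1 ≤ B + b • 1 :=
  calc A + a • 1 ≤ B + (Fintype.card n * ε) • 1 + a • 1 := by
        gcongr; exact le_add_smul_one_of_abs_sub_le hA hB hε h
    _ = B + (Fintype.card n * ε + a) • 1 := by rw [add_assoc, ← add_smul]
    _ ≤ B + b • 1 := by gcongr

theorem PosSemidef.log_det_sub_log_det_mem_Icc {P B : Matrix n n ℝ} (hP : P.PosSemidef)
    {r δ : ℝ} (hr : 0 < r) (hδ : 0 ≤ δ) (hδr : δ < r) (hlo : P + (r - δ) • 1 ≤ B)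
    (hhi : B ≤ P + (r + δ) • 1) :
    Fintype.card n * Real.log (1 - δ / r) ≤ Real.log B.det - Real.log (P + r • 1).det ∧
      Real.log B.det - Real.log (P + r • 1).det ≤ Fintype.card n * Real.log (1 + δ / r) := by
  have hA := hP.posDef_add_smul_one hr
  have hlow : 0 < 1 - δ / r := sub_pos.mpr ((div_lt_one hr).mpr hδr)
  have hupp : 0 < 1 + δ / r := by positivity
  have hB : B.PosDef := by
    simpa only [add_sub_cancel] using
      (hP.posDef_add_smul_one (sub_pos.mpr hδr)).add_posSemidef (le_iff.mp hlo)
  have lower := (hA.smul hlow).log_det_le_log_det_of_le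
    ((hP.one_sub_smul_le_add_smul_one hr hδ).trans hlo)
  have upper := hB.log_det_le_log_det_of_le (hhi.trans (hP.add_smul_one_le_one_add_smul hr hδ))
  rw [hA.log_det_smul hlow] at lower
  rw [hA.log_det_smul hupp] at upper
  constructor <;> linarith

end Matrix

theorem log_det_subK_sub_log_det_subK_mem_Icc {E : ℕ} {K Kh : Matrix (Fin E) (Fin E) ℝ}
    (hK : K.PosSemidef) (hKh : Kh.IsHermitian) {lam lamh eps : ℝ} (hlam : 0 < lam)
    (heps : 0 ≤ eps) (hent : ∀ i j : Fin E, |Kh i j - K i j| ≤ eps) {m : ℕ}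
    (hl : |lamh - lam| ≤ eps / (m : ℝ)) (hDelta : ((m : ℝ) + 1 / (m : ℝ)) * eps < lam)
    {S : Finset (Fin E)} (hS : S.card = m) :
    m * Real.log (1 - ((m : ℝ) + 1 / (m : ℝ)) * eps / lam) ≤
        Real.log (subK Kh S + lamh • 1).det - Real.log (subK K S + lam • 1).det ∧
      Real.log (subK Kh S + lamh • 1).det - Real.log (subK K S + lam • 1).det ≤
        m * Real.log (1 + ((m : ℝ) + 1 / (m : ℝ)) * eps / lam) := by
  set Δ := ((m : ℝ) + 1 / (m : ℝ)) * eps with hΔ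
  have hcard : (Fintype.card {x // x ∈ S} : ℝ) = m := by rw [Fintype.card_coe, hS]
  have hKS₀ : (subK K S).PosSemidef := hK.submatrix _
  have hKS : (subK K S).IsHermitian := hKS₀.isHermitian
  have hKhS : (subK Kh S).IsHermitian := hKh.submatrix _
  have hΔ' : Δ = m * eps + eps / m := by rw [hΔ]; ring
  obtain ⟨hl₁, hl₂⟩ := abs_le.mp hl
  have hlo : subK K S + (lam - Δ) • 1 ≤ subK Kh S + lamh • 1 := by
    refine add_smul_one_le_add_smul_one_of_abs_sub_le hKS hKhS heps
      (fun i j => abs_sub_comm (Kh i j) (K i j) ▸ hent i j) ?_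
    rw [hcard]; linarith
  have hhi : subK Kh S + lamh • 1 ≤ subK K S + (lam + Δ) • 1 := by
    refine add_smul_one_le_add_smul_one_of_abs_sub_le hKhS hKS heps (fun i j => hent i j) ?_
    rw [hcard]; linarith
  simpa only [hcard] using
    hKS₀.log_det_sub_log_det_mem_Icc hlam (by positivity) hDelta hlo hhi

theorem logdet_transfer_general {E : ℕ} (K Kh : Matrix (Fin E) (Fin E) ℝ)
    (hK : K.PosSemidef) (hKh : Kh.IsSymm)
    (lam lamh eps : ℝ) (hlam : 0 < lam) (m : ℕ) (hm : 1 ≤ m)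
    (hent : ∀ i j : Fin E, |Kh i j - K i j| ≤ eps)
    (hl : |lamh - lam| ≤ eps / (m : ℝ))
    (hDelta : ((m : ℝ) + 1 / (m : ℝ)) * eps < lam)
    (Shat Sstar : Finset (Fin E)) (hShat : Shat.card = m) (hSstar : Sstar.card = m)
    (hmaxhat : ∀ S : Finset (Fin E), S.card = m →
      Real.log (subK Kh S + lamh • 1).det ≤ Real.log (subK Kh Shat + lamh • 1).det) :
    Real.log (subK K Sstar + lam • 1).det -
        (m : ℝ) *
          Real.log ((1 + ((m : ℝ) + 1 / (m : ℝ)) * eps / lam) /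
            (1 - ((m : ℝ) + 1 / (m : ℝ)) * eps / lam)) ≤
      Real.log (subK K Shat + lam • 1).det := by
  have heps : 0 ≤ eps := by
    obtain ⟨i, -⟩ := Finset.card_pos.mp (show 0 < Shat.card by omega)
    exact (abs_nonneg _).trans (hent i i)
  have hKh' : Kh.IsHermitian := isHermitian_iff_isSymm.mpr hKh
  have hlow : 0 < 1 - ((m : ℝ) + 1 / (m : ℝ)) * eps / lam :=
    sub_pos.mpr ((div_lt_one hlam).mpr hDelta)
  have hupp : 0 < 1 + ((m : ℝ) + 1 / (m : ℝ)) * eps / lam := by positivity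
  obtain ⟨-, hhat⟩ :=
    log_det_subK_sub_log_det_subK_mem_Icc hK hKh' hlam heps hent hl hDelta hShat
  obtain ⟨hstar, -⟩ :=
    log_det_subK_sub_log_det_subK_mem_Icc hK hKh' hlam heps hent hl hDelta hSstar
  rw [Real.log_div hupp.ne' hlow.ne']
  linarith [hmaxhat Sstar hSstar]

/-- **transfer bound for empirical subset selection.**  Let `K, K̂` be real
symmetric matrices with `K` positive semidefinite, `λ > 0`, `λ̂ ∈ ℝ`, `m ≥ 1`, every entry
of `K̂ − K` at most `ε` in absolute value, `|λ̂ − λ| ≤ ε/m`, and `Δ = (m + 1/m)·ε < λ`.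
Define `F(S) = log det(K_S + λI)` and `F̂(S) = log det(K̂_S + λ̂I)` on size-`m` subsets.
If `Ŝ` maximizes `F̂` and `S*` maximizes `F` over size-`m` subsets, then
`F(Ŝ) ≥ F(S*) − m·log((1 + Δ/λ)/(1 − Δ/λ))`. -/
theorem logdet_transfer {E : ℕ} (K Kh : Matrix (Fin E) (Fin E) ℝ)
    (hK : K.PosSemidef) (hKh : Kh.IsSymm)
    (lam lamh eps : ℝ) (hlam : 0 < lam) (m : ℕ) (hm : 1 ≤ m)
    (hent : ∀ i j : Fin E, |Kh i j - K i j| ≤ eps)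
    (hl : |lamh - lam| ≤ eps / (m : ℝ))
    (hDelta : ((m : ℝ) + 1 / (m : ℝ)) * eps < lam)
    (Shat Sstar : Finset (Fin E)) (hShat : Shat.card = m) (hSstar : Sstar.card = m)
    (hmaxhat : ∀ S : Finset (Fin E), S.card = m →
      Real.log (subK Kh S + lamh • 1).det ≤ Real.log (subK Kh Shat + lamh • 1).det)
    (hmaxstar : ∀ S : Finset (Fin E), S.card = m →
      Real.log (subK K S + lam • 1).det ≤ Real.log (subK K Sstar + lam • 1).det) :
    Real.log (subK K Sstar + lam • 1).det -
        (m : ℝ) *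
          Real.log ((1 + ((m : ℝ) + 1 / (m : ℝ)) * eps / lam) /
            (1 - ((m : ℝ) + 1 / (m : ℝ)) * eps / lam)) ≤
      Real.log (subK K Shat + lam • 1).det :=
  logdet_transfer_general K Kh hK hKh lam lamh eps hlam m hm hent hl hDelta Shat Sstar hShat hSstar
    hmaxhat
end
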